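/- arXiv:1706.08828 — 6 statements merged into one kernel-verified Lean document; each statement's English description precedes it below -/
import Mathlib

section
/- Let κ be a regular uncountable cardinal. The Fréchet ideal I = {A ⊆ κ : |A| < κ} on κ is not precipitous: there exists a decreasing sequence of I-partitions W_0 ≥ W_1 ≥ ... of κ such that every choice of sets A_n ∈ W_n with A_0 ⊇ A_1 ⊇ ... has empty intersection. -/
universe u

variable {α : Type u}

/-- `W` is an `I`-partition of `S`: a maximal family of `I`-positive subsets of `S`
that are pairwise almost disjoint modulo `I`. -/
def IsIPartition (I : Set (Set α)) (S : Set α) (W : Set (Set α)) : Prop :=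
  (∀ A ∈ W, A ⊆ S ∧ A ∉ I) ∧
  (∀ A ∈ W, ∀ B ∈ W, A ≠ B → A ∩ B ∈ I) ∧
  (∀ B : Set α, B ⊆ S → B ∉ I → ∃ A ∈ W, A ∩ B ∉ I)

/-- `W₁` refines `W₂`: every member of `W₁` is contained in some member of `W₂`. -/
def Refines (W₁ W₂ : Set (Set α)) : Prop :=
  ∀ A ∈ W₁, ∃ B ∈ W₂, A ⊆ B

/-!
Well-order `α` and let `position B x` be the order type of `B ∩ Iio x`. If `#E = #α` is
infinite, the set `C` of points of `E` having an immediate predecessor in `E` still has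
`#C = #α`, and `position C x ≤ position E (pred x) < position E x` for `x ∈ C`, because the
predecessor map embeds `C ∩ Iio x` into `E ∩ Iio (pred x)`. Refining each partition by positive
subsets that are skew in this sense inside its pieces, a point lying in every set of a
decreasing branch `A 0 ⊇ A 1 ⊇ ⋯` would give strictly decreasing ordinals `position (A n) x`.
-/

open Set Cardinal Ordinal

namespace IsIPartition

variable {I : Set (Set α)} {S : Set α} {W : Set (Set α)}

theorem eq_of_subset_of_subset (hW : IsIPartition I S W) (hI : IsLowerSet I)
    {A B C : Set α} (hA : A ∈ W) (hB : B ∈ W) (hCA : C ⊆ A) (hCB : C ⊆ B) (hC : C ∉ I) :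
    A = B := by
  by_contra hAB
  exact hC (hI (subset_inter hCA hCB) (hW.2.1 A hA B hB hAB))

theorem exists_subset_of_dense (hI : IsLowerSet I) {G : Set (Set α)}
    (hGpos : ∀ A ∈ G, A ⊆ S ∧ A ∉ I)
    (hGdense : ∀ B ⊆ S, B ∉ I → ∃ A ∈ G, A ⊆ B) :
    ∃ W ⊆ G, IsIPartition I S W := by
  set almostDisjoint := {F | F ⊆ G ∧ F.Pairwise (fun A B ↦ A ∩ B ∈ I)}
  obtain ⟨W, ⟨hWG, hWdisj⟩, hWmax⟩ := zorn_subset almostDisjoint fun c hc hchain ↦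
      ⟨⋃₀ c, ⟨sUnion_subset fun F hF ↦ (hc hF).1,
        hchain.pairwise_sUnion.2 fun F hF ↦ (hc hF).2⟩, fun _ ↦ subset_sUnion_of_mem⟩
  refine ⟨W, hWG, fun A hA ↦ hGpos A (hWG hA), fun A hA B hB ↦ hWdisj hA hB, ?_⟩
  intro B hBS hB
  by_contra! hWB
  obtain ⟨A₀, hA₀G, hA₀B⟩ := hGdense B hBS hB
  have hins : insert A₀ W ∈ almostDisjoint :=
    ⟨insert_subset hA₀G hWG, hWdisj.insert fun A hA _ ↦
      ⟨hI (inter_subset_inter_left A hA₀B) (inter_comm A B ▸ hWB A hA),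
        hI (inter_subset_inter_right A hA₀B) (hWB A hA)⟩⟩
  have hA₀W : A₀ ∈ W := hWmax hins (subset_insert _ _) (mem_insert _ _)
  exact (hGpos A₀ hA₀G).2 (hI (subset_inter subset_rfl hA₀B) (hWB A₀ hA₀W))

end IsIPartition

section WellOrder

variable [LinearOrder α]

def IsPredIn (E : Set α) (y x : α) : Prop :=
  y ∈ E ∧ y < x ∧ ∀ z ∈ E, z < x → z ≤ y

theorem IsPredIn.unique {E : Set α} {x y y' : α} (h : IsPredIn E y x) (h' : IsPredIn E y' x) :
    y = y' :=
  le_antisymm (h'.2.2 y h.1 h.2.1) (h.2.2 y' h'.1 h'.2.1)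

variable [WellFoundedLT α]

theorem exists_isPredIn {E : Set α} {y z : α} (hy : y ∈ E) (hz : z ∈ E) (hyz : y < z) :
    ∃ x ∈ E, IsPredIn E y x := by
  obtain ⟨x, ⟨hxE, hyx⟩, hxmin⟩ := wellFounded_lt.has_min (E ∩ Ioi y) ⟨z, hz, hyz⟩
  exact ⟨x, hxE, hy, hyx, fun w hwE hwx ↦ not_lt.1 fun hyw ↦ hxmin w ⟨hwE, hyw⟩ hwx⟩

noncomputable def position (B : Set α) (x : α) : Ordinal.{u} :=
  typeLT ↥(B ∩ Iio x)

theorem position_mono {B B' : Set α} (h : B ⊆ B') (x : α) : position B x ≤ position B' x :=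
  type_mono (inter_subset_inter_left _ h)

theorem position_le_position_of_strictMonoOn {B B' : Set α} {x y : α} {f : α → α}
    (hf : StrictMonoOn f (B ∩ Iio x)) (hmaps : MapsTo f (B ∩ Iio x) (B' ∩ Iio y)) :
    position B x ≤ position B' y :=
  (OrderEmbedding.ofStrictMono (hmaps.restrict f _ _)
    fun _ _ h ↦ hf (Subtype.prop _) (Subtype.prop _) h).ltEmbedding.ordinal_type_le

theorem position_lt_position {B : Set α} {x y : α} (hy : y ∈ B) (hyx : y < x) :
    position B y < position B x := by
  let y' : ↥(B ∩ Iio x) := ⟨y, hy, hyx⟩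
  calc position B y ≤ typeLT (Iio y') :=
        (OrderEmbedding.ofStrictMono (fun z : ↥(B ∩ Iio y) ↦
          (⟨⟨z, z.2.1, z.2.2.trans hyx⟩, z.2.2⟩ : Iio y'))
          fun _ _ h ↦ h).ltEmbedding.ordinal_type_le
    _ < position B x := (type_Iio_lt y').trans_lt (typein_lt_type _ y')

def IsSkewSubset (C B : Set α) : Prop :=
  C ⊆ B ∧ ∀ x ∈ C, position C x < position B x

theorem IsSkewSubset.mono_right {C B B' : Set α} (h : IsSkewSubset C B) (hBB' : B ⊆ B') :
    IsSkewSubset C B' :=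
  ⟨h.1.trans hBB', fun x hx ↦ (h.2 x hx).trans_le (position_mono hBB' x)⟩

theorem isSkewSubset_setOf_isPredIn (E : Set α) :
    IsSkewSubset {x ∈ E | ∃ y, IsPredIn E y x} E := by
  set C := {x ∈ E | ∃ y, IsPredIn E y x}
  choose! pred hpred using fun x (hx : x ∈ C) ↦ hx.2
  refine ⟨fun x hx ↦ hx.1, fun x hx ↦ ?_⟩
  calc position C x ≤ position E (pred x) :=
        position_le_position_of_strictMonoOn
          (fun z hz z' hz' hzz' ↦
            (hpred z hz.1).2.1.trans_le ((hpred z' hz'.1).2.2 z hz.1.1 hzz'))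
          (fun z hz ↦ ⟨(hpred z hz.1).1,
            (hpred z hz.1).2.1.trans_le ((hpred x hx).2.2 z hz.1.1 hz.2)⟩)
    _ < position E x := position_lt_position (hpred x hx).1 (hpred x hx).2.1

/-- Only the greatest element of `E` (if any) has no successor in `E`, and the successor map
`E ∖ {max E} → C` is injective. -/
theorem mk_le_mk_setOf_isPredIn_add_one (E : Set α) :
    #E ≤ #{x ∈ E | ∃ y, IsPredIn E y x} + 1 := by
  set E' := {y ∈ E | ∃ z ∈ E, y < z}
  choose! succ hsucc using fun y (hy : y ∈ E') ↦
    exists_isPredIn hy.1 hy.2.choose_spec.1 hy.2.choose_spec.2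
  have hinj : InjOn succ E' := fun y hy y' hy' h ↦
    (hsucc y hy).2.unique (h ▸ (hsucc y' hy').2)
  have hmaps : MapsTo succ E' {x ∈ E | ∃ y, IsPredIn E y x} := fun y hy ↦
    ⟨(hsucc y hy).1, y, (hsucc y hy).2⟩
  have htop : (E \ E').Subsingleton := fun y hy y' hy' ↦
    le_antisymm (not_lt.1 fun h ↦ hy'.2 ⟨hy'.1, y, hy.1, h⟩)
      (not_lt.1 fun h ↦ hy.2 ⟨hy.1, y', hy'.1, h⟩)
  calc #E ≤ #(E \ E' : Set α) + #E' := le_mk_sdiff_add_mk E E'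
    _ ≤ 1 + #{x ∈ E | ∃ y, IsPredIn E y x} := by
        gcongr
        · exact htop.cardinalMk_le_one
        · rw [← mk_image_eq_of_injOn succ E' hinj]
          exact mk_le_mk_of_subset hmaps.image_subset
    _ = _ := add_comm _ _

theorem iInter_eq_empty_of_isSkewSubset {A : ℕ → Set α}
    (h : ∀ n, IsSkewSubset (A (n + 1)) (A n)) : ⋂ n, A n = ∅ := by
  refine eq_empty_of_forall_notMem fun x hx ↦ ?_
  obtain ⟨n, hn⟩ := WellFounded.not_rel_apply_succ (r := (· < ·)) fun n ↦ position (A n) x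
  exact hn ((h n).2 x (mem_iInter.1 hx (n + 1)))

theorem exists_isSkewSubset_of_not_mk_lt (hα : ℵ₀ ≤ #α) {E : Set α} (hE : ¬#E < #α) :
    ∃ C : Set α, ¬#C < #α ∧ IsSkewSubset C E := by
  refine ⟨_, fun hC ↦ hE ?_, isSkewSubset_setOf_isPredIn E⟩
  exact (mk_le_mk_setOf_isPredIn_add_one E).trans_lt
    (add_lt_of_lt hα hC (one_lt_aleph0.trans_le hα))

section Ideal

variable {I : Set (Set α)} {S : Set α}

def skewPieces (I : Set (Set α)) (W : Set (Set α)) : Set (Set α) :=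
  {C | C ∉ I ∧ ∃ A ∈ W, IsSkewSubset C A}

theorem exists_isIPartition_subset_skewPieces (hI : IsLowerSet I)
    (hskew : ∀ E ∉ I, ∃ C ∉ I, IsSkewSubset C E) {W : Set (Set α)}
    (hW : IsIPartition I S W) : ∃ W' ⊆ skewPieces I W, IsIPartition I S W' := by
  refine IsIPartition.exists_subset_of_dense hI
    (fun C ⟨hC, A, hA, hCA⟩ ↦ ⟨hCA.1.trans (hW.1 A hA).1, hC⟩) fun B hBS hB ↦ ?_
  obtain ⟨A, hA, hAB⟩ := hW.2.2 B hBS hB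
  obtain ⟨C, hC, hCAB⟩ := hskew _ hAB
  exact ⟨C, ⟨hC, A, hA, hCAB.mono_right inter_subset_left⟩, hCAB.1.trans inter_subset_right⟩

theorem IsIPartition.isSkewSubset_of_mem_skewPieces (hI : IsLowerSet I) {W : Set (Set α)}
    (hW : IsIPartition I S W) {A C : Set α} (hA : A ∈ W) (hC : C ∈ skewPieces I W)
    (hCA : C ⊆ A) : IsSkewSubset C A := by
  obtain ⟨hCpos, B, hB, hCB⟩ := hC
  obtain rfl : B = A := hW.eq_of_subset_of_subset hI hB hA hCB.1 hCA hCpos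
  exact hCB

theorem exists_refining_isIPartition_seq_iInter_eq_empty (hI : IsLowerSet I)
    (hskew : ∀ E ∉ I, ∃ C ∉ I, IsSkewSubset C E) :
    ∃ W : ℕ → Set (Set α),
      (∀ n, IsIPartition I S (W n)) ∧
      (∀ n, Refines (W (n + 1)) (W n)) ∧
      ∀ A : ℕ → Set α, (∀ n, A n ∈ W n) → (∀ n, A (n + 1) ⊆ A n) →
        ⋂ n, A n = ∅ := by
  obtain ⟨W₀, -, hW₀⟩ :=
    IsIPartition.exists_subset_of_dense hI (G := {A | A ⊆ S ∧ A ∉ I}) (fun _ hA ↦ hA)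
      fun B hBS hB ↦ ⟨B, ⟨hBS, hB⟩, subset_rfl⟩
  choose! next hnext_sub hnext using fun W (hW : IsIPartition I S W) ↦
    exists_isIPartition_subset_skewPieces hI hskew hW
  have hpart : ∀ n, IsIPartition I S (next^[n] W₀) := by
    intro n
    induction n with
    | zero => exact hW₀
    | succ n ih => rw [Function.iterate_succ_apply']; exact hnext _ ih
  have hsub : ∀ n, next^[n + 1] W₀ ⊆ skewPieces I (next^[n] W₀) := fun n ↦ by
    rw [Function.iterate_succ_apply']; exact hnext_sub _ (hpart n)
  refine ⟨fun n ↦ next^[n] W₀, hpart, fun n C hC ↦ ?_, fun A hAW hanti ↦ ?_⟩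
  · obtain ⟨-, B, hB, hCB⟩ := hsub n hC
    exact ⟨B, hB, hCB.1⟩
  · exact iInter_eq_empty_of_isSkewSubset fun n ↦
      (hpart n).isSkewSubset_of_mem_skewPieces hI (hAW n) (hsub n (hAW (n + 1))) (hanti n)

end Ideal

end WellOrder

theorem frechet_not_precipitous_general
    (hunc : Cardinal.aleph0 < Cardinal.mk α) :
    ∃ W : ℕ → Set (Set α),
      (∀ n, IsIPartition {A : Set α | Cardinal.mk A < Cardinal.mk α} Set.univ (W n)) ∧
      (∀ n, Refines (W (n + 1)) (W n)) ∧
      ∀ A : ℕ → Set α, (∀ n, A n ∈ W n) → (∀ n, A (n + 1) ⊆ A n) →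
        (⋂ n, A n) = ∅ := by
  obtain ⟨_, _⟩ := exists_wellFoundedLT α
  exact exists_refining_isIPartition_seq_iInter_eq_empty
    (fun _ _ hBA hA ↦ (mk_le_mk_of_subset hBA).trans_lt hA)
    fun _ hE ↦ exists_isSkewSubset_of_not_mk_lt hunc.le hE

/-- For a regular uncountable cardinal `κ = #α`, the Fréchet ideal
`{A : |A| < κ}` is not precipitous: there is a decreasing sequence of
`I`-partitions of `κ` such that every decreasing choice sequence has empty
intersection. -/
theorem frechet_not_precipitous (hreg : (Cardinal.mk α).IsRegular)
    (hunc : Cardinal.aleph0 < Cardinal.mk α) :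
    ∃ W : ℕ → Set (Set α),
      (∀ n, IsIPartition {A : Set α | Cardinal.mk A < Cardinal.mk α} Set.univ (W n)) ∧
      (∀ n, Refines (W (n + 1)) (W n)) ∧
      ∀ A : ℕ → Set α, (∀ n, A n ∈ W n) → (∀ n, A (n + 1) ⊆ A n) →
        (⋂ n, A n) = ∅ :=
  frechet_not_precipitous_general hunc
end

section
/- Let X be a topological space with a Kuratowski partition F = {F_α : α < κ}. For each permutation π of κ, let X_π be a copy of X and equip the disjoint union (topological sum) ⊕_{π} X_π with the sum topology. For α < κ, set F*(α) = ⋃_π F_{π(α)}^{(π)}, where F_β^{(π)} denotes the copy of F_β inside X_π. Then F* = {F*(α) : α < κ} is a Kuratowski partition of ⊕_π X_π. -/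
/-- A set has the Baire property if it differs from an open set by a meager set. -/
def BaireProperty {X : Type*} [TopologicalSpace X] (s : Set X) : Prop :=
  ∃ U : Set X, IsOpen U ∧ IsMeagre (symmDiff s U)

open Set

lemma sigma_fiber_interior_closure {ι : Type*} {Y : ι → Type*} [∀ i, TopologicalSpace (Y i)]
    (s : Set (Σ i, Y i)) (i : ι) :
    Sigma.mk i ⁻¹' (interior (closure s)) = interior (closure (Sigma.mk i ⁻¹' s)) := by
  rw [isOpenMap_sigmaMk.preimage_interior_eq_interior_preimage continuous_sigmaMk,
    isOpenMap_sigmaMk.preimage_closure_eq_closure_preimage continuous_sigmaMk]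

lemma sigma_nowhereDense {ι : Type*} {Y : ι → Type*} [∀ i, TopologicalSpace (Y i)]
    {s : Set (Σ i, Y i)} (h : ∀ i, IsNowhereDense (Sigma.mk i ⁻¹' s)) :
    IsNowhereDense s := by
  ext ⟨i, x⟩
  simp only [mem_empty_iff_false, iff_false]
  intro hx
  have : x ∈ Sigma.mk i ⁻¹' (interior (closure s)) := hx
  rw [sigma_fiber_interior_closure, h i] at this
  exact this

lemma sigma_meagre {ι : Type*} {Y : ι → Type*} [∀ i, TopologicalSpace (Y i)]
    {s : Set (Σ i, Y i)} (h : ∀ i, IsMeagre (Sigma.mk i ⁻¹' s)) :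
    IsMeagre s := by
  have key : ∀ i, ∃ g : ℕ → Set (Y i), (∀ n, IsNowhereDense (g n)) ∧
      Sigma.mk i ⁻¹' s ⊆ ⋃ n, g n := by
    intro i
    obtain ⟨S, hND, hc, hsub⟩ := isMeagre_iff_countable_union_isNowhereDense.mp (h i)
    obtain ⟨g, hg⟩ := (Set.Countable.insert ∅ hc).exists_eq_range (insert_nonempty _ _)
    refine ⟨g, fun n => ?_, fun x hx => ?_⟩
    · have : g n ∈ insert ∅ S := by rw [hg]; exact mem_range_self n
      rcases this with h' | h'
      · rw [h']; simp [IsNowhereDense]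
      · exact hND _ h'
    · obtain ⟨t, htS, hxt⟩ := hsub hx
      have : t ∈ insert ∅ S := mem_insert_of_mem _ htS
      rw [hg] at this
      obtain ⟨n, rfl⟩ := this
      exact mem_iUnion.mpr ⟨n, hxt⟩
  choose g hgND hgsub using key
  rw [isMeagre_iff_countable_union_isNowhereDense]
  refine ⟨range (fun n : ℕ => {p : Σ i, Y i | p.2 ∈ g p.1 n}), ?_, countable_range _, ?_⟩
  · rintro t ⟨n, rfl⟩
    exact sigma_nowhereDense (fun i => hgND i n)
  · rintro ⟨i, x⟩ hx
    obtain ⟨n, hn⟩ := mem_iUnion.mp (hgsub i hx)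
    exact ⟨_, mem_range_self n, hn⟩

/-- Given a Kuratowski partition `F` of `X`, the family
`F*(α) = ⋃_π {copy of F (π α) in the summand X_π}` is a Kuratowski partition of
the topological sum `⊕_{π ∈ Perm ι} X_π`. -/
theorem kuratowski_partition_of_sum {X ι : Type*} [TopologicalSpace X]
    (F : ι → Set X)
    (hdisj : Pairwise (Function.onFun Disjoint F))
    (hcov : (⋃ α, F α) = Set.univ)
    (hmeager : ∀ α, IsMeagre (F α))
    (hBP : ∀ A : Set ι, BaireProperty (⋃ α ∈ A, F α)) :
    let Fstar : ι → Set (Σ _ : Equiv.Perm ι, X) := fun α => {p | p.2 ∈ F (p.1 α)}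
    Pairwise (Function.onFun Disjoint Fstar) ∧
    (⋃ α, Fstar α) = Set.univ ∧
    (∀ α, IsMeagre (Fstar α)) ∧
    (∀ A : Set ι, BaireProperty (⋃ α ∈ A, Fstar α)) := by
  intro Fstar
  refine ⟨?_, ?_, ?_, ?_⟩
  · intro α β hab
    rw [Function.onFun, Set.disjoint_left]
    rintro ⟨π, x⟩ hα hβ
    exact Set.disjoint_left.mp (hdisj (fun h => hab (π.injective h) : π α ≠ π β)) hα hβ
  · ext ⟨π, x⟩
    simp only [mem_iUnion, mem_univ, iff_true]
    have : x ∈ ⋃ α, F α := hcov ▸ mem_univ x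
    obtain ⟨β, hβ⟩ := mem_iUnion.mp this
    exact ⟨π.symm β, by simpa [Fstar] using hβ⟩
  · intro α
    apply sigma_meagre
    intro π
    exact hmeager (π α)
  · intro A
    have key : ∀ π : Equiv.Perm ι,
        Sigma.mk π ⁻¹' (⋃ α ∈ A, Fstar α) = ⋃ β ∈ (π : ι → ι) '' A, F β := by
      intro π
      ext x
      simp only [mem_preimage, mem_iUnion, Fstar, mem_setOf_eq, mem_image]
      constructor
      · rintro ⟨α, hα, hx⟩; exact ⟨π α, ⟨α, hα, rfl⟩, hx⟩
      · rintro ⟨β, ⟨α, hα, rfl⟩, hx⟩; exact ⟨α, hα, hx⟩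
    choose U hUopen hUm using fun π : Equiv.Perm ι => hBP ((π : ι → ι) '' A)
    refine ⟨{p | p.2 ∈ U p.1}, ?_, ?_⟩
    · rw [isOpen_sigma_iff]
      intro π
      exact hUopen π
    · apply sigma_meagre
      intro π
      have : Sigma.mk π ⁻¹' (symmDiff (⋃ α ∈ A, Fstar α) {p : Σ _ : Equiv.Perm ι, X | p.2 ∈ U p.1})
          = symmDiff (⋃ β ∈ (π : ι → ι) '' A, F β) (U π) := by
        simp only [symmDiff_def, sup_eq_union, Set.preimage_union, Set.preimage_diff, key]
        rfl
      rw [this]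
      exact hUm π
end

section
/- Let X be a topological space in which no nonempty open set is meager (e.g., a nonempty Baire space where every nonempty open subset is non-meager), with a Kuratowski partition F = {F_α : α < κ} with every F_α nonempty, where κ is a regular cardinal. Form the sum space ⊕_π X_π over all permutations π of κ with partition F* as above. Then the K-ideal I_{F*} = {A ⊆ κ : ⋃_{α∈A} F*(α) is meager in ⊕_π X_π} is contained in the Fréchet ideal: every A ∈ I_{F*} has cardinality less than κ. -/
lemma IsMeagre.union' {X : Type*} [TopologicalSpace X] {s t : Set X}
    (hs : IsMeagre s) (ht : IsMeagre t) : IsMeagre (s ∪ t) := by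
  rw [IsMeagre, Set.compl_union]
  exact Filter.inter_mem hs ht

/-- If `X` has no nonempty meager open set and carries a Kuratowski partition
`F` with all pieces nonempty, indexed by a regular cardinal `κ = #ι`, then the
`K`-ideal of the partition `F*` of the sum `⊕_{π ∈ Perm ι} X_π` is contained in
the Fréchet ideal: every `A ∈ I_{F*}` has cardinality `< κ`. -/
theorem K_ideal_of_sum_is_frechet {X ι : Type*} [TopologicalSpace X]
    (hX : ∀ U : Set X, IsOpen U → U.Nonempty → ¬ IsMeagre U)
    (hreg : (Cardinal.mk ι).IsRegular)
    (F : ι → Set X)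
    (hne : ∀ α, (F α).Nonempty)
    (hdisj : Pairwise (Function.onFun Disjoint F))
    (hcov : (⋃ α, F α) = Set.univ)
    (hmeager : ∀ α, IsMeagre (F α))
    (hBP : ∀ A : Set ι, BaireProperty (⋃ α ∈ A, F α)) :
    ∀ A : Set ι,
      IsMeagre (⋃ α ∈ A, {p : Σ _ : Equiv.Perm ι, X | p.2 ∈ F (p.1 α)}) →
      Cardinal.mk A < Cardinal.mk ι := by
  classical
  intro A hA
  by_contra hlt
  push_neg at hlt
  have hAle : Cardinal.mk A ≤ Cardinal.mk ι := Cardinal.mk_subtype_le _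
  have hAeq : Cardinal.mk A = Cardinal.mk ι := le_antisymm hAle hlt
  have hinf : Infinite ι := Cardinal.infinite_iff.mpr hreg.aleph0_le
  -- every "slice" of the big union is meager in X
  have slice : ∀ π : Equiv.Perm ι, IsMeagre (⋃ α ∈ A, F (π α)) := by
    intro π
    have h := hA.preimage_of_isOpenMap
      (continuous_sigmaMk (σ := fun _ : Equiv.Perm ι => X) (i := π))
      (isOpenMap_sigmaMk (σ := fun _ : Equiv.Perm ι => X) (i := π))
    have heq : (Sigma.mk π ⁻¹'
        (⋃ α ∈ A, {p : Σ _ : Equiv.Perm ι, X | p.2 ∈ F (p.1 α)}))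
        = ⋃ α ∈ A, F (π α) := by
      ext x; simp
    rwa [heq] at h
  -- X is nonempty, so univ is not meager
  obtain ⟨x₀, hx₀⟩ := hne (Classical.arbitrary ι)
  have huniv : ¬ IsMeagre (Set.univ : Set X) :=
    hX Set.univ isOpen_univ ⟨x₀, trivial⟩
  -- the union over A is meager (take π = identity)
  have hUA : IsMeagre (⋃ α ∈ A, F α) := by
    have := slice 1
    simpa using this
  -- hence the union over Aᶜ is not meager
  have hUAc : ¬ IsMeagre (⋃ α ∈ Aᶜ, F α) := by
    intro hc
    apply huniv
    have hcover : (⋃ α ∈ A, F α) ∪ (⋃ α ∈ Aᶜ, F α) = Set.univ := by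
      rw [← hcov]
      ext x
      simp only [Set.mem_union, Set.mem_iUnion]
      constructor
      · rintro (⟨α, _, hx⟩ | ⟨α, _, hx⟩) <;> exact ⟨α, hx⟩
      · rintro ⟨α, hx⟩
        by_cases hα : α ∈ A
        · exact Or.inl ⟨α, hα, hx⟩
        · exact Or.inr ⟨α, hα, hx⟩
    rw [← hcover]
    exact hUA.union' hc
  -- build a permutation π with π '' Aᶜ ⊆ A
  have hsum : Cardinal.mk (↥Aᶜ ⊕ ↥A) = Cardinal.mk A := by
    simp only [Cardinal.mk_sum, Cardinal.lift_id]
    exact Cardinal.add_eq_right (hAeq ▸ hreg.aleph0_le)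
      (le_trans (Cardinal.mk_subtype_le _) hAeq.symm.le)
  obtain ⟨e⟩ : Nonempty (↥A ≃ (↥Aᶜ ⊕ ↥A)) := Cardinal.eq.mp hsum.symm
  let f : (↥A ⊕ ↥Aᶜ) ≃ (↥A ⊕ ↥Aᶜ) :=
    (e.sumCongr (Equiv.refl ↥Aᶜ)).trans
      ((Equiv.sumAssoc ↥Aᶜ ↥A ↥Aᶜ).trans
        (((Equiv.refl ↥Aᶜ).sumCongr
            ((Equiv.sumComm ↥A ↥Aᶜ).trans e.symm)).trans
          (Equiv.sumComm ↥Aᶜ ↥A)))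
  let π : Equiv.Perm ι :=
    (Equiv.Set.sumCompl A).symm.trans (f.trans (Equiv.Set.sumCompl A))
  have hπc : ∀ c ∈ Aᶜ, π c ∈ A := by
    intro c hc
    have h1 : (Equiv.Set.sumCompl A).symm c = Sum.inr ⟨c, hc⟩ :=
      Equiv.Set.sumCompl_symm_apply_of_notMem hc
    have h2 : f (Sum.inr ⟨c, hc⟩)
        = Sum.inl (e.symm (Sum.inl ⟨c, hc⟩)) := rfl
    show (Equiv.Set.sumCompl A) (f ((Equiv.Set.sumCompl A).symm c)) ∈ A
    rw [h1, h2]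
    exact (e.symm (Sum.inl ⟨c, hc⟩)).2
  -- hence Aᶜ ⊆ π '' A
  have hsub : Aᶜ ⊆ π '' A := by
    intro c hc
    obtain ⟨y, hy⟩ := π.surjective c
    refine ⟨y, ?_, hy⟩
    by_contra hyA
    exact hc (hy ▸ hπc y hyA)
  -- the slice at π contains the union over Aᶜ, contradiction
  apply hUAc
  refine (slice π).mono ?_
  intro z hz
  simp only [Set.mem_iUnion] at hz ⊢
  obtain ⟨β, hβ, hzβ⟩ := hz
  obtain ⟨α, hα, rfl⟩ := hsub hβ
  exact ⟨α, hα, hzβ⟩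
end

section
/- Let J be a σ-complete ultrafilter on κ and F_α = {x ∈ J^ω : α = min ⋂_n x(n)} for α < κ. For every A ⊆ κ, the set ⋃_{α∈A} F_α has the Baire property in J^ω. Consequently {F_α : α < κ} is a Kuratowski partition of J^ω when J is nonprincipal. -/
open Set Filter Topology

theorem IsMeagre.baireProperty {X : Type*} [TopologicalSpace X] {s : Set X} (h : IsMeagre s) :
    BaireProperty s :=
  ⟨∅, isOpen_empty, by rwa [Set.bot_eq_empty.symm, symmDiff_bot]⟩

theorem baireProperty_of_isMeagre_compl {X : Type*} [TopologicalSpace X] {s : Set X}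
    (h : IsMeagre sᶜ) : BaireProperty s :=
  ⟨univ, isOpen_univ, by rwa [Set.top_eq_univ.symm, symmDiff_top, hnot_eq_compl]⟩

theorem dense_setOf_exists_apply_mem {ι X : Type*} [Infinite ι] [TopologicalSpace X] {S : Set X}
    (hS : S.Nonempty) : Dense {x : ι → X | ∃ i, x i ∈ S} := by
  classical
  obtain ⟨s, hs⟩ := hS
  intro x
  have hlim : Tendsto (fun i => Function.update x i s) cofinite (𝓝 x) := by
    refine tendsto_pi_nhds.2 fun j => tendsto_const_nhds.congr' ?_
    filter_upwards [eventually_cofinite_ne j] with i hij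
    exact (Function.update_of_ne hij.symm _ _).symm
  exact mem_closure_of_tendsto hlim (Eventually.of_forall fun i => ⟨i, by simpa using hs⟩)

theorem isMeagre_setOf_forall_apply_notMem {ι X : Type*} [Infinite ι] [TopologicalSpace X]
    {S : Set X} (hSo : IsOpen S) (hS : S.Nonempty) : IsMeagre {x : ι → X | ∀ i, x i ∉ S} := by
  have hopen : IsOpen {x : ι → X | ∃ i, x i ∈ S} := by
    have hunion : {x : ι → X | ∃ i, x i ∈ S} = ⋃ i, (fun x => x i) ⁻¹' S := by
      ext x
      simp
    exact hunion ▸ isOpen_iUnion fun i => hSo.preimage (continuous_apply i)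
  rw [IsMeagre]
  convert residual_of_dense_open hopen (dense_setOf_exists_apply_mem hS) using 1
  ext x
  simp

section MinOfIntersection

variable {α : Type*} (J : Ultrafilter α)

theorem exists_isLeast_iInter [LinearOrder α] [WellFoundedLT α]
    (hσ : ∀ f : ℕ → Set α, (∀ n, f n ∈ J) → (⋂ n, f n) ∈ J) (x : ℕ → {s : Set α // s ∈ J}) :
    ∃ a, IsLeast (⋂ n, (x n : Set α)) a := by
  have hne : (⋂ n, (x n : Set α)).Nonempty := J.nonempty_of_mem (hσ _ fun n => (x n).2)
  exact ⟨_, wellFounded_lt.min_mem _ hne, fun _ hb => wellFounded_lt.min_le hb⟩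

variable [TopologicalSpace {s : Set α // s ∈ J}] [DiscreteTopology {s : Set α // s ∈ J}]

theorem isMeagre_setOf_not_iInter_subset {A : Set α} (hA : A ∈ J) :
    IsMeagre {x : ℕ → {s : Set α // s ∈ J} | ¬(⋂ n, (x n : Set α)) ⊆ A} :=
  (isMeagre_setOf_forall_apply_notMem (S := {s : {s : Set α // s ∈ J} | (s : Set α) ⊆ A})
    (isOpen_discrete _) ⟨⟨A, hA⟩, Subset.rfl⟩).mono
      fun _ hx n hn => hx ((iInter_subset _ n).trans hn)

theorem baireProperty_biUnion_setOf_isLeast_iInter [LinearOrder α] [WellFoundedLT α]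
    (hσ : ∀ f : ℕ → Set α, (∀ n, f n ∈ J) → (⋂ n, f n) ∈ J) (A : Set α) :
    BaireProperty (⋃ a ∈ A, {x : ℕ → {s : Set α // s ∈ J} | IsLeast (⋂ n, (x n : Set α)) a}) := by
  rcases J.mem_or_compl_mem A with hA | hA
  · refine baireProperty_of_isMeagre_compl ((isMeagre_setOf_not_iInter_subset J hA).mono ?_)
    intro x hx hsub
    obtain ⟨a, ha⟩ := exists_isLeast_iInter J hσ x
    exact hx (mem_biUnion (hsub ha.1) ha)
  · refine IsMeagre.baireProperty ((isMeagre_setOf_not_iInter_subset J hA).mono ?_)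
    exact iUnion₂_subset fun a haA x hx hsub => hsub hx.1 haA

end MinOfIntersection

/-- Let `J` be a σ-complete ultrafilter on a well-ordered set `α`, and
`F a = {x ∈ J^ω : a = min ⋂ n, x n}`. Then every subfamily union
`⋃_{a ∈ A} F a` has the Baire property in `J^ω`; consequently, if `J` is
nonprincipal, `{F a}` is a Kuratowski partition of `J^ω`. -/
theorem min_sets_kuratowski {α : Type*} [LinearOrder α] [WellFoundedLT α]
    (J : Ultrafilter α)
    (hσ : ∀ f : ℕ → Set α, (∀ n, f n ∈ J) → (⋂ n, f n) ∈ J) :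
    letI : TopologicalSpace {s : Set α // s ∈ J} := ⊥
    let F : α → Set (ℕ → {s : Set α // s ∈ J}) :=
      fun a => {x | IsLeast (⋂ n, (x n : Set α)) a}
    (∀ A : Set α, BaireProperty (⋃ a ∈ A, F a)) ∧
    ((∀ a : α, {a} ∉ J) →
      (Pairwise (Function.onFun Disjoint F) ∧ (⋃ a, F a) = Set.univ ∧
        (∀ a, IsMeagre (F a)) ∧ ∀ A : Set α, BaireProperty (⋃ a ∈ A, F a))) := by
  intro F
  let _ : TopologicalSpace {s : Set α // s ∈ J} := ⊥
  have : DiscreteTopology {s : Set α // s ∈ J} := ⟨rfl⟩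
  have hBP := baireProperty_biUnion_setOf_isLeast_iInter J hσ
  refine ⟨hBP, fun hJ => ⟨fun a b hab => ?_, ?_, fun a => ?_, hBP⟩⟩
  · exact Set.disjoint_left.2 fun x ha hb => hab (ha.unique hb)
  · exact eq_univ_of_forall fun x => mem_iUnion.2 (exists_isLeast_iInter J hσ x)
  · refine (isMeagre_setOf_not_iInter_subset J (J.compl_mem_iff_notMem.2 (hJ a))).mono ?_
    intro x (hx : IsLeast _ a) hsub
    exact hsub hx.1 rfl
end

section
/- Let I be a κ-complete ideal on a regular cardinal κ containing singletons, with I⁺ = P(κ) \ I. Define X(I) = {x ∈ (I⁺)^ω : ⋂_{n∈ω} x(n) ≠ ∅ and for all n ∈ ω, ⋂_{m<n} x(m) ∈ I⁺}, viewed as a subspace of the complete metric space (I⁺)^ω where I⁺ is discrete. If I is not precipitous, then X(I) is not a Baire space: there exists a nonempty open subset of X(I) that is meager in X(I). -/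
universe u

variable {α : Type u}

/-- `I` is precipitous: every decreasing sequence of `I`-partitions of a set of
positive measure admits a decreasing choice sequence with nonempty intersection. -/
def Precipitous (I : Set (Set α)) : Prop :=
  ∀ S : Set α, S ∉ I → ∀ W : ℕ → Set (Set α),
    (∀ n, IsIPartition I S (W n)) → (∀ n, Refines (W (n + 1)) (W n)) →
    ∃ A : ℕ → Set α, (∀ n, A n ∈ W n) ∧ (∀ n, A (n + 1) ⊆ A n) ∧
      (⋂ n, A n).Nonempty

/-!
Fix a witness of non-precipitousness: `S ∉ I` and decreasing `I`-partitions `W n` of `S` such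
that every decreasing choice `A n ∈ W n` has empty intersection. The open set of `x ∈ X(I)` with
`x 0 = S` is meagre: for each `n`, the points that either do not start with `S` or have some
coordinate below a member of `W n` form a dense open set, since a basic neighbourhood only fixes
finitely many coordinates, whose intersection `B ⊆ S` is positive and hence meets some `A ∈ W n`
positively, so that `A ∩ B` can be appended. A point starting with `S` in all these sets yields
`A n ∈ W n` with `x (k n) ⊆ A n`. As the finite intersections of `x` are positive while distinct
members of a partition are almost disjoint, `A (n + 1)` lies in the unique member `A n` of `W n`
containing it, and `⋂ n, A n ⊇ ⋂ n, x n ≠ ∅`, a contradiction.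
-/

open Set PiNat

theorem PiNat.exists_cylinder_subset {E : ℕ → Type*} [∀ n, TopologicalSpace (E n)]
    [∀ n, DiscreteTopology (E n)] {x : ∀ n, E n} {V : Set (∀ n, E n)} (hV : IsOpen V)
    (hx : x ∈ V) : ∃ k, cylinder x k ⊆ V := by
  obtain ⟨_, ⟨y, k, rfl⟩, hxy, hsub⟩ :=
    (isTopologicalBasis_cylinders E).exists_subset_of_mem_open hx hV
  exact ⟨k, mem_cylinder_iff_eq.mp hxy ▸ hsub⟩

theorem IsIPartition.eq_of_subset_of_subset_s13 {I : Set (Set α)} {S : Set α} {W : Set (Set α)}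
    (hW : IsIPartition I S W) (hdown : ∀ A B : Set α, B ⊆ A → A ∈ I → B ∈ I)
    {A B C : Set α} (hA : A ∈ W) (hB : B ∈ W) (hC : C ∉ I) (hCA : C ⊆ A) (hCB : C ⊆ B) :
    A = B := by
  by_contra hAB
  exact hC (hdown _ _ (subset_inter hCA hCB) (hW.2.1 A hA B hB hAB))

def XI (I : Set (Set α)) : Set (ℕ → {s : Set α // s ∉ I}) :=
  {x | (⋂ n, (x n : Set α)).Nonempty ∧ ∀ n : ℕ, (⋂ m ∈ Finset.range n, (x m : Set α)) ∉ I}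

section XI

variable {I : Set (Set α)}

theorem mem_XI_of_subset (hempty : ∅ ∈ I) (hdown : ∀ A B : Set α, B ⊆ A → A ∈ I → B ∈ I)
    {x : ℕ → {s : Set α // s ∉ I}} {C : Set α} (hC : C ∉ I) (hCx : ∀ m, C ⊆ x m) :
    x ∈ XI I := by
  have hCne : C.Nonempty := nonempty_iff_ne_empty.mpr fun h => hC (h ▸ hempty)
  exact ⟨hCne.mono (subset_iInter hCx),
    fun n hn => hC (hdown _ _ (subset_iInter₂ fun m _ => hCx m) hn)⟩

theorem exists_mem_XI_cylinder (hempty : ∅ ∈ I) (hdown : ∀ A B : Set α, B ⊆ A → A ∈ I → B ∈ I)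
    (x : ℕ → {s : Set α // s ∉ I}) {k : ℕ} {C : Set α} (hC : C ∉ I)
    (hCx : ∀ m < k, C ⊆ x m) : ∃ y ∈ XI I, y ∈ cylinder x k ∧ (y k : Set α) = C := by
  let y : ℕ → {s : Set α // s ∉ I} := fun m => if m < k then x m else ⟨C, hC⟩
  have hCy : ∀ m, C ⊆ y m := by
    intro m
    by_cases hm : m < k
    · simpa [y, hm] using hCx m hm
    · simp [y, hm]
  exact ⟨y, mem_XI_of_subset hempty hdown hC hCy, fun m hm => by simp [y, hm], by simp [y]⟩

def headIs (I : Set (Set α)) (S : Set α) : Set (XI I) := {x | (x.1 0 : Set α) = S}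

def belowPartition (S : Set α) (W : Set (Set α)) : Set (XI I) :=
  {x | (x.1 0 : Set α) = S → ∃ k, ∃ A ∈ W, (x.1 k : Set α) ⊆ A}

theorem disjoint_headIs_iInter_belowPartition
    (hdown : ∀ A B : Set α, B ⊆ A → A ∈ I → B ∈ I) {S : Set α} {W : ℕ → Set (Set α)}
    (hW : ∀ n, IsIPartition I S (W n)) (hWref : ∀ n, Refines (W (n + 1)) (W n))
    (hbad : ∀ A : ℕ → Set α, (∀ n, A n ∈ W n) → (∀ n, A (n + 1) ⊆ A n) → ⋂ n, A n = ∅) :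
    Disjoint (headIs I S) (⋂ n, belowPartition S (W n)) := by
  refine disjoint_left.mpr fun x hx0 hxD => ?_
  choose k A hA hxA using fun n => mem_iInter.mp hxD n hx0
  have hanti : ∀ n, A (n + 1) ⊆ A n := by
    intro n
    obtain ⟨B, hB, hAB⟩ := hWref n _ (hA (n + 1))
    set K := max (k n) (k (n + 1)) + 1
    have hAn : A n = B := (hW n).eq_of_subset_of_subset_s13 hdown (hA n) hB (x.2.2 K)
      ((biInter_subset_of_mem (Finset.mem_range.mpr (by omega))).trans (hxA n))
      ((biInter_subset_of_mem (Finset.mem_range.mpr (by omega))).trans ((hxA (n + 1)).trans hAB))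
    exact hAn ▸ hAB
  obtain ⟨a, ha⟩ := x.2.1
  have hmem : a ∈ ⋂ n, A n := mem_iInter.mpr fun n => hxA n (mem_iInter.mp ha (k n))
  rw [hbad A hA hanti] at hmem
  exact hmem

theorem headIs_nonempty (hempty : ∅ ∈ I) (hdown : ∀ A B : Set α, B ⊆ A → A ∈ I → B ∈ I)
    {S : Set α} (hS : S ∉ I) : (headIs I S).Nonempty :=
  ⟨⟨fun _ => ⟨S, hS⟩, mem_XI_of_subset hempty hdown hS fun _ => subset_rfl⟩, rfl⟩

variable [TopologicalSpace {s : Set α // s ∉ I}] [DiscreteTopology {s : Set α // s ∉ I}]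

theorem isOpen_setOf_apply_mem_XI (k : ℕ) (T : Set {s : Set α // s ∉ I}) :
    IsOpen {x : XI I | x.1 k ∈ T} :=
  ((isOpen_discrete T).preimage (continuous_apply k)).preimage continuous_subtype_val

theorem isOpen_headIs (S : Set α) : IsOpen (headIs I S) :=
  isOpen_setOf_apply_mem_XI (I := I) 0 {s | (s : Set α) = S}

theorem isOpen_belowPartition (S : Set α) (W : Set (Set α)) :
    IsOpen (belowPartition (I := I) S W) := by
  have hunion : belowPartition S W =
      {x : XI I | x.1 0 ∈ {s : {s : Set α // s ∉ I} | (s : Set α) ≠ S}} ∪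
        ⋃ k, {x : XI I | x.1 k ∈ {s : {s : Set α // s ∉ I} | ∃ A ∈ W, (s : Set α) ⊆ A}} := by
    ext x
    simp [belowPartition, imp_iff_not_or]
  rw [hunion]
  exact (isOpen_setOf_apply_mem_XI 0 _).union
    (isOpen_iUnion fun k => isOpen_setOf_apply_mem_XI k _)

theorem dense_belowPartition (hempty : ∅ ∈ I) (hdown : ∀ A B : Set α, B ⊆ A → A ∈ I → B ∈ I)
    {S : Set α} {W : Set (Set α)} (hW : IsIPartition I S W) :
    Dense (belowPartition (I := I) S W) := by
  refine dense_iff_inter_open.mpr fun O hO ⟨x, hxO⟩ => ?_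
  by_cases hx0 : (x.1 0 : Set α) = S
  swap
  · exact ⟨x, hxO, fun h => absurd h hx0⟩
  obtain ⟨V, hV, rfl⟩ := isOpen_induced_iff.mp hO
  obtain ⟨k, hkV⟩ := exists_cylinder_subset hV hxO
  set B := ⋂ m ∈ Finset.range (k + 1), (x.1 m : Set α)
  have hBS : B ⊆ S := hx0 ▸ biInter_subset_of_mem (Finset.mem_range.mpr k.succ_pos)
  obtain ⟨A, hA, hAB⟩ := hW.2.2 B hBS (x.2.2 (k + 1))
  obtain ⟨y, hyX, hyx, hyk⟩ := exists_mem_XI_cylinder hempty hdown x.1 hAB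
    fun m hm => inter_subset_right.trans (biInter_subset_of_mem (Finset.mem_range.mpr hm))
  exact ⟨⟨y, hyX⟩, hkV (cylinder_anti _ k.le_succ hyx),
    fun _ => ⟨k + 1, A, hA, hyk ▸ inter_subset_left⟩⟩

end XI

theorem XI_not_baire_of_not_precipitous_general (I : Set (Set α))
    (hempty : ∅ ∈ I)
    (hdown : ∀ A B : Set α, B ⊆ A → A ∈ I → B ∈ I)
    (hnprec : ¬ Precipitous I) :
    letI : TopologicalSpace {s : Set α // s ∉ I} := ⊥
    ∃ U : Set {x : ℕ → {s : Set α // s ∉ I} //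
        (⋂ n, (x n : Set α)).Nonempty ∧
        ∀ n : ℕ, (⋂ m ∈ Finset.range n, ((x m : Set α))) ∉ I},
      IsOpen U ∧ U.Nonempty ∧ IsMeagre U := by
  let _ : TopologicalSpace {s : Set α // s ∉ I} := ⊥
  have : DiscreteTopology {s : Set α // s ∉ I} := ⟨rfl⟩
  unfold Precipitous at hnprec
  push Not at hnprec
  obtain ⟨S, hS, W, hW, hWref, hbad⟩ := hnprec
  have hresidual : ⋂ n, belowPartition S (W n) ∈ residual (XI I) :=
    countable_iInter_mem.mpr fun n =>
      residual_of_dense_open (isOpen_belowPartition S (W n))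
        (dense_belowPartition hempty hdown (hW n))
  exact ⟨headIs I S, isOpen_headIs S, headIs_nonempty hempty hdown hS,
    Filter.mem_of_superset hresidual
      (disjoint_headIs_iInter_belowPartition hdown hW hWref hbad).subset_compl_left⟩

/-- If a `κ`-complete ideal `I` on a regular cardinal `κ`, containing singletons,
is not precipitous, then the space `X(I) ⊆ (I⁺)^ω` is not Baire: it has a
nonempty open meager subset. -/
theorem XI_not_baire_of_not_precipitous (I : Set (Set α))
    (hreg : (Cardinal.mk α).IsRegular)
    (hempty : ∅ ∈ I)
    (hdown : ∀ A B : Set α, B ⊆ A → A ∈ I → B ∈ I)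
    (hcomplete : ∀ s : Set (Set α), Cardinal.mk s < Cardinal.mk α →
      (∀ A ∈ s, A ∈ I) → ⋃₀ s ∈ I)
    (hsingle : ∀ a : α, {a} ∈ I)
    (hproper : Set.univ ∉ I)
    (hnprec : ¬ Precipitous I) :
    letI : TopologicalSpace {s : Set α // s ∉ I} := ⊥
    ∃ U : Set {x : ℕ → {s : Set α // s ∉ I} //
        (⋂ n, (x n : Set α)).Nonempty ∧
        ∀ n : ℕ, (⋂ m ∈ Finset.range n, ((x m : Set α))) ∉ I},
      IsOpen U ∧ U.Nonempty ∧ IsMeagre U :=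
  XI_not_baire_of_not_precipitous_general I hempty hdown hnprec
end

section
/- Let I be a κ-complete ideal on a regular cardinal κ containing singletons, and suppose I is precipitous. Then the space X(I) = {x ∈ (I⁺)^ω : ⋂_n x(n) ≠ ∅ and ∀n, ⋂_{m<n} x(m) ∈ I⁺}, as a subspace of the product of discrete spaces (I⁺)^ω, is a Baire space. -/
universe u

variable {α : Type u}

namespace XIBaireAux

variable (I : Set (Set α))

/-- A "condition": a length together with a sequence of positive sets. -/
abbrev Cond := ℕ × (ℕ → {s : Set α // s ∉ I})

/-- The space `X(I)`. -/
abbrev XSp := {x : ℕ → {s : Set α // s ∉ I} //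
    (⋂ n, (x n : Set α)).Nonempty ∧
    ∀ n : ℕ, (⋂ m ∈ Finset.range n, ((x m : Set α))) ∉ I}

/-- Intersection of the first `p.1` entries of a condition. -/
def IntC (p : Cond I) : Set α := ⋂ m ∈ Finset.range p.1, ((p.2 m : Set α))

/-- The cylinder of a condition. -/
def CylC (p : Cond I) : Set (XSp I) :=
  {y | ∀ m < p.1, (y : ℕ → {s : Set α // s ∉ I}) m = p.2 m}

/-- `q` extends `p`. -/
def ExtC (p q : Cond I) : Prop := p.1 ≤ q.1 ∧ ∀ m < p.1, q.2 m = p.2 m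

variable {I}

lemma mem_IntC {p : Cond I} {z : α} : z ∈ IntC I p ↔ ∀ m < p.1, z ∈ (p.2 m : Set α) := by
  simp [IntC]

lemma ExtC_intC {p q : Cond I} (h : ExtC I p q) : IntC I q ⊆ IntC I p := by
  intro z hz
  rw [mem_IntC] at hz ⊢
  intro m hm
  rw [← h.2 m hm]
  exact hz m (lt_of_lt_of_le hm h.1)

lemma ExtC_trans {p q r : Cond I} (h1 : ExtC I p q) (h2 : ExtC I q r) : ExtC I p r :=
  ⟨h1.1.trans h2.1, fun m hm => (h2.2 m (lt_of_lt_of_le hm h1.1)).trans (h1.2 m hm)⟩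

lemma exists_point (hempty : ∅ ∈ I) (hdown : ∀ A B : Set α, B ⊆ A → A ∈ I → B ∈ I)
    (p : Cond I) (hp : IntC I p ∉ I) :
    ∃ y : XSp I, y ∈ CylC I p := by
  classical
  set g : ℕ → {s : Set α // s ∉ I} :=
    fun m => if h : m < p.1 then p.2 m else ⟨IntC I p, hp⟩ with hg
  have hsub : ∀ n, IntC I p ⊆ (g n : Set α) := by
    intro n
    by_cases h : n < p.1
    · simp only [hg, dif_pos h]
      exact fun z hz => mem_IntC.1 hz n h
    · simp only [hg, dif_neg h]
      exact fun z hz => hz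
  have hnonempty : IntC I p ≠ ∅ := by
    intro h
    rw [h] at hp
    exact hp hempty
  have hne : (⋂ n, (g n : Set α)).Nonempty := by
    obtain ⟨z, hz⟩ := Set.nonempty_iff_ne_empty.2 hnonempty
    exact ⟨z, Set.mem_iInter.2 fun n => hsub n hz⟩
  have hfin : ∀ n : ℕ, (⋂ m ∈ Finset.range n, ((g m : Set α))) ∉ I := by
    intro n hn
    exact hp (hdown _ _ (Set.subset_iInter₂ fun m _ => hsub m) hn)
  refine ⟨⟨g, hne, hfin⟩, ?_⟩
  intro m hm
  show g m = p.2 m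
  simp only [hg, dif_pos hm]

variable (I) in
/-- A combinatorial density property of a subset of `X(I)`. -/
def HD (U : Set (XSp I)) : Prop :=
  ∀ p : Cond I, ∀ B : Set α, B ⊆ IntC I p → B ∉ I →
    ∃ q : Cond I, ExtC I p q ∧ p.1 < q.1 ∧ IntC I q ⊆ B ∧ IntC I q ∉ I ∧ CylC I q ⊆ U

lemma part (hdown : ∀ A B : Set α, B ⊆ A → A ∈ I → B ∈ I)
    {U : Set (XSp I)} (hU : HD I U) (p : Cond I) (_hp : IntC I p ∉ I) :
    ∃ W : Set (Cond I),
      (∀ q ∈ W, ExtC I p q ∧ p.1 < q.1 ∧ IntC I q ∉ I ∧ CylC I q ⊆ U) ∧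
      (∀ q ∈ W, ∀ q' ∈ W, q ≠ q' → IntC I q ∩ IntC I q' ∈ I) ∧
      (∀ B : Set α, B ⊆ IntC I p → B ∉ I → ∃ q ∈ W, IntC I q ∩ B ∉ I) := by
  classical
  set S : Set (Set (Cond I)) :=
    {W | (∀ q ∈ W, ExtC I p q ∧ p.1 < q.1 ∧ IntC I q ∉ I ∧ CylC I q ⊆ U) ∧
      (∀ q ∈ W, ∀ q' ∈ W, q ≠ q' → IntC I q ∩ IntC I q' ∈ I)} with hS
  obtain ⟨W, hWmax⟩ := zorn_subset S (by
    intro c hc hchain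
    refine ⟨⋃₀ c, ⟨?_, ?_⟩, fun s hs => Set.subset_sUnion_of_mem hs⟩
    · rintro q ⟨w, hw, hq⟩
      exact (hc hw).1 q hq
    · rintro q ⟨w, hw, hq⟩ q' ⟨w', hw', hq'⟩ hne
      rcases hchain.total hw hw' with h | h
      · exact (hc hw').2 q (h hq) q' hq' hne
      · exact (hc hw).2 q hq q' (h hq') hne)
  have hW : W ∈ S := hWmax.1
  refine ⟨W, hW.1, hW.2, ?_⟩
  intro B hBsub hBpos
  by_contra hcon
  push_neg at hcon
  obtain ⟨q, hqx, hqlt, hqB, hqpos, hqcyl⟩ := hU p B hBsub hBpos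
  have hqW : q ∉ W := by
    intro hmem
    apply hqpos
    have h1 := hcon q hmem
    rwa [Set.inter_eq_left.2 hqB] at h1
  have hWq : insert q W ∈ S := by
    constructor
    · rintro r (rfl | hr)
      · exact ⟨hqx, hqlt, hqpos, hqcyl⟩
      · exact hW.1 r hr
    · rintro r (rfl | hr) r' (rfl | hr') hne
      · exact absurd rfl hne
      · exact hdown (IntC I r' ∩ B) (IntC I r ∩ IntC I r')
          (fun z hz => ⟨hz.2, hqB hz.1⟩) (hcon r' hr')
      · exact hdown (IntC I r ∩ B) (IntC I r ∩ IntC I r')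
          (fun z hz => ⟨hz.1, hqB hz.2⟩) (hcon r hr)
      · exact hW.2 r hr r' hr' hne
  have := hWmax.2 hWq (Set.subset_insert q W)
  exact hqW (this (Set.mem_insert q W))

lemma main (hempty : ∅ ∈ I) (hdown : ∀ A B : Set α, B ⊆ A → A ∈ I → B ∈ I)
    (hprec : Precipitous I)
    (f : ℕ → Set (XSp I)) (hf : ∀ n, HD I (f n))
    (p₀ : Cond I) (hp₀ : IntC I p₀ ∉ I) :
    ∃ y : XSp I, y ∈ CylC I p₀ ∧ ∀ n, y ∈ f n := by
  classical
  have hpart : ∀ n (p : Cond I), IntC I p ∉ I → ∃ W : Set (Cond I),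
      (∀ q ∈ W, ExtC I p q ∧ p.1 < q.1 ∧ IntC I q ∉ I ∧ CylC I q ⊆ f n) ∧
      (∀ q ∈ W, ∀ q' ∈ W, q ≠ q' → IntC I q ∩ IntC I q' ∈ I) ∧
      (∀ B : Set α, B ⊆ IntC I p → B ∉ I → ∃ q ∈ W, IntC I q ∩ B ∉ I) :=
    fun n p hp => part hdown (hf n) p hp
  choose W hW1 hW2 hW3 using hpart
  let chain : ℕ → Set (Cond I) := fun n =>
    Nat.rec (W 0 p₀ hp₀)
      (fun n Cn => {q | ∃ p, p ∈ Cn ∧ ∃ h : IntC I p ∉ I, q ∈ W (n + 1) p h}) n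
  have chain_succ : ∀ n, chain (n + 1) =
      {q | ∃ p, p ∈ chain n ∧ ∃ h : IntC I p ∉ I, q ∈ W (n + 1) p h} := fun n => rfl
  -- invariant
  have inv : ∀ n, ∀ q ∈ chain n, ExtC I p₀ q ∧ 0 < q.1 ∧ IntC I q ∉ I ∧ CylC I q ⊆ f n := by
    intro n
    induction n with
    | zero =>
      intro q hq
      obtain ⟨h1, h2, h3, h4⟩ := hW1 0 p₀ hp₀ q hq
      exact ⟨h1, lt_of_le_of_lt (Nat.zero_le _) h2, h3, h4⟩
    | succ n ih =>
      rintro q ⟨p, hpC, hp, hqW⟩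
      obtain ⟨h1, h2, h3, h4⟩ := hW1 (n + 1) p hp q hqW
      exact ⟨ExtC_trans (ih p hpC).1 h1, lt_of_le_of_lt (Nat.zero_le _) h2, h3, h4⟩
  have pair : ∀ n, ∀ q ∈ chain n, ∀ q' ∈ chain n, q ≠ q' → IntC I q ∩ IntC I q' ∈ I := by
    intro n
    induction n with
    | zero => exact hW2 0 p₀ hp₀
    | succ n ih =>
      rintro q ⟨p, hpC, hp, hqW⟩ q' ⟨p', hpC', hp', hqW'⟩ hne
      by_cases hpp : p = p'
      · subst hpp
        exact hW2 (n + 1) p hp q hqW q' hqW' hne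
      · have h1 : IntC I q ⊆ IntC I p := ExtC_intC (hW1 (n + 1) p hp q hqW).1
        have h2 : IntC I q' ⊆ IntC I p' := ExtC_intC (hW1 (n + 1) p' hp' q' hqW').1
        exact hdown _ _ (Set.inter_subset_inter h1 h2) (ih p hpC p' hpC' hpp)
  have maxl : ∀ n, ∀ B : Set α, B ⊆ IntC I p₀ → B ∉ I → ∃ q ∈ chain n, IntC I q ∩ B ∉ I := by
    intro n
    induction n with
    | zero => exact hW3 0 p₀ hp₀
    | succ n ih =>
      intro B hB hBpos
      obtain ⟨q, hqC, hqB⟩ := ih B hB hBpos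
      have hq : IntC I q ∉ I := (inv n q hqC).2.2.1
      obtain ⟨c, hcW, hc⟩ := hW3 (n + 1) q hq (IntC I q ∩ B) Set.inter_subset_left hqB
      refine ⟨c, ⟨q, hqC, hq, hcW⟩, ?_⟩
      intro h
      exact hc (hdown (IntC I c ∩ B) (IntC I c ∩ (IntC I q ∩ B))
          (fun z hz => ⟨hz.1, hz.2.2⟩) h)
  -- apply precipitousness
  have hpartn : ∀ n, IsIPartition I (IntC I p₀) (IntC I '' chain n) := by
    intro n
    refine ⟨?_, ?_, ?_⟩
    · rintro A ⟨q, hq, rfl⟩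
      exact ⟨ExtC_intC (inv n q hq).1, (inv n q hq).2.2.1⟩
    · rintro A ⟨q, hq, rfl⟩ B ⟨q', hq', rfl⟩ hne
      exact pair n q hq q' hq' fun h => hne (by rw [h])
    · intro B hB hBpos
      obtain ⟨q, hq, h⟩ := maxl n B hB hBpos
      exact ⟨IntC I q, ⟨q, hq, rfl⟩, h⟩
  have href : ∀ n, Refines (IntC I '' chain (n + 1)) (IntC I '' chain n) := by
    rintro n A ⟨q, ⟨p, hpC, hp, hqW⟩, rfl⟩
    exact ⟨IntC I p, ⟨p, hpC, rfl⟩, ExtC_intC (hW1 (n + 1) p hp q hqW).1⟩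
  obtain ⟨A, hA1, hA2, hA3⟩ := hprec (IntC I p₀) hp₀ _ hpartn href
  have hqex : ∀ n, ∃ q, q ∈ chain n ∧ IntC I q = A n := fun n => hA1 n
  choose q hqC hqI using hqex
  have hApos : ∀ n, A n ∉ I := by
    intro n
    rw [← hqI n]
    exact (inv n (q n) (hqC n)).2.2.1
  -- the chosen conditions form a chain
  have link : ∀ n, ExtC I (q n) (q (n + 1)) ∧ (q n).1 < (q (n + 1)).1 := by
    intro n
    have hmem := hqC (n + 1)
    rw [chain_succ n] at hmem
    obtain ⟨p, hpC, hp, hqW⟩ := hmem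
    have hkey := hW1 (n + 1) p hp (q (n + 1)) hqW
    have hpq : p = q n := by
      by_contra hne
      have hint := pair n p hpC (q n) (hqC n) hne
      apply hApos (n + 1)
      apply hdown _ _ _ hint
      intro z hz
      have hz1 : z ∈ IntC I (q (n + 1)) := by rw [hqI (n + 1)]; exact hz
      refine ⟨ExtC_intC hkey.1 hz1, ?_⟩
      rw [hqI n]
      exact hA2 n hz
    rw [hpq] at hkey
    exact ⟨hkey.1, hkey.2.1⟩
  have len : ∀ n, n < (q n).1 := by
    intro n
    induction n with
    | zero => exact (inv 0 (q 0) (hqC 0)).2.1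
    | succ n ih => exact lt_of_le_of_lt (Nat.succ_le_of_lt ih) (link n).2
  have lenmono : ∀ {n n' : ℕ}, n ≤ n' → (q n).1 ≤ (q n').1 := by
    intro n n' h
    induction h with
    | refl => exact le_rfl
    | step _ ih => exact ih.trans (le_of_lt (link _).2)
  have consist : ∀ n n', n ≤ n' → ∀ m < (q n).1, (q n').2 m = (q n).2 m := by
    intro n n' h
    induction h with
    | refl => intro m _; rfl
    | @step k h' ih =>
      intro m hm
      exact ((link k).1.2 m (lt_of_lt_of_le hm (lenmono h'))).trans (ih m hm)
  set y0 : ℕ → {s : Set α // s ∉ I} := fun m => (q m).2 m with hy0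
  have key : ∀ n, ∀ m, m < (q n).1 → y0 m = (q n).2 m := by
    intro n m hm
    rcases le_total n m with h | h
    · exact consist n m h m hm
    · exact (consist m n h m (len m)).symm
  have hIntsub : ∀ n, IntC I (q n) ⊆ ⋂ m ∈ Finset.range n, (y0 m : Set α) := by
    intro n z hz
    simp only [Set.mem_iInter, Finset.mem_range]
    intro m hm
    have hm' : m < (q n).1 := lt_trans hm (len n)
    rw [key n m hm']
    exact mem_IntC.1 hz m hm'
  have hy2 : ∀ n : ℕ, (⋂ m ∈ Finset.range n, ((y0 m : Set α))) ∉ I := by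
    intro n h
    apply hApos n
    rw [← hqI n]
    exact hdown _ _ (hIntsub n) h
  have hy1 : (⋂ m, (y0 m : Set α)).Nonempty := by
    obtain ⟨z, hz⟩ := hA3
    refine ⟨z, Set.mem_iInter.2 fun m => ?_⟩
    have hzm : z ∈ A m := Set.mem_iInter.1 hz m
    rw [← hqI m] at hzm
    rw [hy0]
    exact mem_IntC.1 hzm m (len m)
  refine ⟨⟨y0, hy1, hy2⟩, ?_, ?_⟩
  · intro m hm
    have hext : ExtC I p₀ (q 0) := (inv 0 (q 0) (hqC 0)).1
    show y0 m = p₀.2 m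
    rw [key 0 m (lt_of_lt_of_le hm hext.1)]
    exact hext.2 m hm
  · intro n
    exact (inv n (q n) (hqC n)).2.2.2 fun m hm => key n m hm

section Top

variable [tp : TopologicalSpace {s : Set α // s ∉ I}]

lemma cyl_open (htp : tp = ⊥) (p : Cond I) : IsOpen (CylC I p) := by
  haveI : DiscreteTopology {s : Set α // s ∉ I} := ⟨htp⟩
  have h1 : IsOpen {g : ℕ → {s : Set α // s ∉ I} | ∀ m < p.1, g m = p.2 m} := by
    have heq : {g : ℕ → {s : Set α // s ∉ I} | ∀ m < p.1, g m = p.2 m}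
        = ⋂ m ∈ Finset.range p.1, (fun g : ℕ → {s : Set α // s ∉ I} => g m) ⁻¹' {p.2 m} := by
      ext g
      simp [Finset.mem_range]
    rw [heq]
    exact isOpen_biInter_finset fun m _ => (isOpen_discrete _).preimage (continuous_apply m)
  exact h1.preimage continuous_subtype_val

lemma open_contains_cyl (htp : tp = ⊥) {U : Set (XSp I)} (hU : IsOpen U)
    {y : XSp I} (hy : y ∈ U) :
    ∃ k : ℕ, ∀ z : XSp I,
      (∀ m < k, (z : ℕ → {s : Set α // s ∉ I}) m = (y : ℕ → {s : Set α // s ∉ I}) m) → z ∈ U := by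
  have hind : Topology.IsInducing (Subtype.val : XSp I → (ℕ → {s : Set α // s ∉ I})) := ⟨rfl⟩
  obtain ⟨V, hV, hVU⟩ := hind.isOpen_iff.1 hU
  have hyV : (y : ℕ → {s : Set α // s ∉ I}) ∈ V := by
    rw [← hVU] at hy
    exact hy
  obtain ⟨F, u, h1, h2⟩ := isOpen_pi_iff.1 hV _ hyV
  refine ⟨F.sup id + 1, fun z hz => ?_⟩
  rw [← hVU]
  apply h2
  intro i hi
  have hi' : i ∈ F := hi
  rw [hz i (Nat.lt_succ_of_le (Finset.le_sup (f := id) hi'))]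
  exact (h1 i hi').2

lemma hd_of_denseOpen (htp : tp = ⊥) (hempty : ∅ ∈ I)
    (hdown : ∀ A B : Set α, B ⊆ A → A ∈ I → B ∈ I)
    {U : Set (XSp I)} (hUo : IsOpen U) (hUd : Dense U) : HD I U := by
  classical
  intro p B hBsub hBpos
  set p₁ : Cond I := (p.1 + 1, fun m => if h : m < p.1 then p.2 m else ⟨B, hBpos⟩) with hp₁
  have hcomp : ∀ m, m < p.1 → ((p₁.2 m : Set α)) = ((p.2 m : Set α)) := by
    intro m hm
    simp only [hp₁, dif_pos hm]
  have hcompB : ((p₁.2 p.1 : Set α)) = B := by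
    simp only [hp₁, dif_neg (lt_irrefl p.1)]
  have hInt : IntC I p₁ = B := by
    apply subset_antisymm
    · intro z hz
      have h := mem_IntC.1 hz p.1 (Nat.lt_succ_self _)
      rwa [hcompB] at h
    · intro z hz
      rw [mem_IntC]
      intro m hm
      rcases Nat.lt_or_ge m p.1 with h | h
      · rw [hcomp m h]
        exact mem_IntC.1 (hBsub hz) m h
      · have hm' : m = p.1 := Nat.le_antisymm (Nat.lt_succ_iff.1 hm) h
        subst hm'
        rwa [hcompB]
    
  have hp₁pos : IntC I p₁ ∉ I := by
    rw [hInt]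
    exact hBpos
  obtain ⟨y₁, hy₁⟩ := exists_point hempty hdown p₁ hp₁pos
  obtain ⟨y', hy'c, hy'U⟩ := hUd.inter_open_nonempty _ (cyl_open htp p₁) ⟨y₁, hy₁⟩
  obtain ⟨k, hk⟩ := open_contains_cyl htp hUo hy'U
  refine ⟨(max k (p.1 + 1), (y' : ℕ → {s : Set α // s ∉ I})), ⟨?_, ?_⟩, ?_, ?_, ?_, ?_⟩
  · exact le_trans (Nat.le_succ _) (le_max_right _ _)
  · intro m hm
    show (y' : ℕ → {s : Set α // s ∉ I}) m = p.2 m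
    rw [hy'c m (lt_trans hm (Nat.lt_succ_self p.1))]
    simp only [hp₁, dif_pos hm]
  · exact lt_of_lt_of_le (Nat.lt_succ_self _) (le_max_right _ _)
  · intro z hz
    have h : z ∈ (((y' : ℕ → {s : Set α // s ∉ I}) p.1 : Set α)) :=
      mem_IntC.1 hz p.1 (lt_of_lt_of_le (Nat.lt_succ_self _) (le_max_right _ _))
    rw [hy'c p.1 (Nat.lt_succ_self _)] at h
    rwa [hcompB] at h
  · exact y'.2.2 (max k (p.1 + 1))
  · intro z hz
    exact hk z fun m hm => hz m (lt_of_lt_of_le hm (le_max_left _ _))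

lemma baire (hempty : ∅ ∈ I) (hdown : ∀ A B : Set α, B ⊆ A → A ∈ I → B ∈ I)
    (hprec : Precipitous I) (htp : tp = ⊥) :
    BaireSpace (XSp I) := by
  constructor
  intro f hfo hfd
  rw [dense_iff_inter_open]
  rintro O hO ⟨y₀, hy₀⟩
  obtain ⟨k, hk⟩ := open_contains_cyl htp hO hy₀
  set p₀ : Cond I := (k, (y₀ : ℕ → {s : Set α // s ∉ I})) with hp₀def
  have hp₀ : IntC I p₀ ∉ I := y₀.2.2 k
  have hf : ∀ n, HD I (f n) := fun n => hd_of_denseOpen htp hempty hdown (hfo n) (hfd n)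
  obtain ⟨y, hyc, hyf⟩ := main hempty hdown hprec f hf p₀ hp₀
  exact ⟨y, hk y fun m hm => hyc m hm, Set.mem_iInter.2 hyf⟩

end Top

end XIBaireAux

/-- If a `κ`-complete ideal `I` on a regular cardinal `κ`, containing singletons,
is precipitous, then the space `X(I) ⊆ (I⁺)^ω` is a Baire space. -/
theorem XI_baire_of_precipitous (I : Set (Set α))
    (hreg : (Cardinal.mk α).IsRegular)
    (hempty : ∅ ∈ I)
    (hdown : ∀ A B : Set α, B ⊆ A → A ∈ I → B ∈ I)
    (hcomplete : ∀ s : Set (Set α), Cardinal.mk s < Cardinal.mk α →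
      (∀ A ∈ s, A ∈ I) → ⋃₀ s ∈ I)
    (hsingle : ∀ a : α, {a} ∈ I)
    (hproper : Set.univ ∉ I)
    (hprec : Precipitous I) :
    letI : TopologicalSpace {s : Set α // s ∉ I} := ⊥
    BaireSpace {x : ℕ → {s : Set α // s ∉ I} //
        (⋂ n, (x n : Set α)).Nonempty ∧
        ∀ n : ℕ, (⋂ m ∈ Finset.range n, ((x m : Set α))) ∉ I} := by
  exact XIBaireAux.baire (tp := ⊥) hempty hdown hprec rfl
end
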